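/- arXiv:1407.1763 — 2 statements merged into one kernel-verified Lean document; each statement's English description precedes it below -/
import Mathlib

section
/- Let F be holomorphic on Δ⁺ with a continuous extension to Δ⁺ ∪ γ, and suppose there exists a constant C > 0 such that |Im F(t)| ≤ C·|Re F(t)| for every t ∈ γ. If F vanishes to infinite order at 0, then either F is identically zero on Δ⁺, or there exists a sequence (p_j) of points of Δ⁺ with p_j → 0, Re F(p_j) ≠ 0 for every j, and the sequence |Im F(p_j)| / |Re F(p_j)| is unbounded. -/
/-!
If the ratio `|Im F| / |Re F|` stayed bounded near `0`, then by the open mapping theorem `F` could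
not meet the imaginary axis except at `0` there (moving `F` sideways off the axis keeps `Im F` but
makes `Re F` arbitrarily small). Hence `F ^ 2 + ε` omits `(-∞, 0]` on the disc `B(i r, r) ⊆ Δ⁺`
tangent to `ℝ` at `0`, so `(F ^ 2 + ε)^(-1/2)` has positive real part there and the
Borel–Carathéodory inequality lets it grow at most like `1 / y` at `i y`. Choosing
`ε = C² y⁴ ≥ |F (i y)|²`, the vanishing of `F` to order `2` makes it grow like `1 / y ^ 2`
instead, unless `F (i r) = 0`. The identity theorem supplies arbitrarily small `r` with
`F (i r) ≠ 0` when `F ≢ 0`.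
-/

/-- The open upper half disc `Δ⁺ = {ζ ∈ ℂ : |ζ| < 1, Im ζ > 0}`. -/
def upperHalfDisc : Set ℂ := {z : ℂ | ‖z‖ < 1 ∧ 0 < z.im}

/-- The interval `γ = (-1,1)` viewed as a subset of the real axis in `ℂ`. -/
def realSegment : Set ℂ := {z : ℂ | z.im = 0 ∧ -1 < z.re ∧ z.re < 1}

open Complex Metric Filter Topology Set

lemma isOpen_upperHalfDisc : IsOpen upperHalfDisc :=
  (isOpen_lt continuous_norm continuous_const).inter (isOpen_lt continuous_const continuous_im)

lemma convex_upperHalfDisc : Convex ℝ upperHalfDisc := by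
  have : upperHalfDisc = ball 0 1 ∩ {z : ℂ | 0 < z.im} := by ext z; simp [upperHalfDisc]
  rw [this]
  exact (convex_ball 0 1).inter (convex_halfSpace_im_gt 0)

lemma I_mul_mem_upperHalfDisc {y : ℝ} (hy : y ∈ Ioo 0 1) : I * y ∈ upperHalfDisc := by
  simp [upperHalfDisc, abs_of_pos hy.1, hy.1, hy.2]

lemma ball_I_mul_subset {r δ : ℝ} (hrδ : 2 * r ≤ δ) (hr1 : 2 * r ≤ 1) :
    ball (I * r) r ⊆ upperHalfDisc ∩ ball 0 δ := by
  intro w hw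
  have hr : 0 < r := pos_of_mem_ball hw
  rw [mem_ball, dist_eq] at hw
  have him : |w.im - r| < r := by
    simpa using (abs_im_le_norm (w - I * r)).trans_lt hw
  have hnorm : ‖w‖ < 2 * r := calc
    ‖w‖ ≤ ‖w - I * r‖ + ‖I * r‖ := norm_le_norm_sub_add w _
    _ < r + r := by
      rw [norm_mul, norm_I, norm_real, one_mul, Real.norm_eq_abs, abs_of_pos hr]; linarith
    _ = 2 * r := by ring
  exact ⟨⟨by linarith, by linarith [abs_lt.mp him]⟩, by rw [mem_ball_zero_iff]; linarith⟩

lemma dist_I_mul_I_mul (x y : ℝ) : dist (I * x) (I * y) = |x - y| := by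
  rw [dist_eq, ← mul_sub, ← ofReal_sub, norm_mul, norm_I, norm_real, one_mul, Real.norm_eq_abs]

lemma exists_seq_ratio_unbounded {f : ℂ → ℂ} {s : Set ℂ}
    (h : ∀ δ > 0, ∀ M : ℝ, ∃ z ∈ s ∩ ball 0 δ, (f z).re ≠ 0 ∧ M * |(f z).re| < |(f z).im|) :
    ∃ p : ℕ → ℂ, (∀ j, p j ∈ s) ∧ Tendsto p atTop (𝓝 0) ∧ (∀ j, (f (p j)).re ≠ 0) ∧
      ∀ M : ℝ, ∃ j, M < |(f (p j)).im| / |(f (p j)).re| := by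
  choose p hp using fun j : ℕ => h (1 / ((j : ℝ) + 1)) Nat.one_div_pos_of_nat j
  refine ⟨p, fun j => (hp j).1.1, ?_, fun j => (hp j).2.1, fun M => ⟨⌈M⌉₊, ?_⟩⟩
  · refine tendsto_zero_iff_norm_tendsto_zero.mpr <| squeeze_zero (fun _ => norm_nonneg _)
      (fun j => ?_) tendsto_one_div_add_atTop_nhds_zero_nat
    simpa using (mem_ball_zero_iff.mp (hp j).1.2).le
  · obtain ⟨-, hre, hratio⟩ := hp ⌈M⌉₊
    rw [lt_div_iff₀ (abs_pos.mpr hre)]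
    calc M * |(f (p ⌈M⌉₊)).re| ≤ ⌈M⌉₊ * |(f (p ⌈M⌉₊)).re| := by
          gcongr; exact Nat.le_ceil M
      _ < _ := hratio

lemma im_eq_zero_of_re_eq_zero_of_image_mem_nhds {f : ℂ → ℂ} {U : Set ℂ} {z : ℂ} {M : ℝ}
    (hU : f '' U ∈ 𝓝 (f z)) (hcone : ∀ w ∈ U, (f w).re ≠ 0 → |(f w).im| ≤ M * |(f w).re|)
    (hz : (f z).re = 0) : (f z).im = 0 := by
  have hshift : ∀ᶠ σ : ℝ in 𝓝[>] 0, f z + σ ∈ f '' U := by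
    have : Tendsto (fun σ : ℝ => f z + σ) (𝓝 0) (𝓝 (f z)) := by
      simpa using (continuous_const.add continuous_ofReal).tendsto (f := fun σ : ℝ => f z + σ) 0
    exact nhdsWithin_le_nhds (this hU)
  have hbound : ∀ᶠ σ : ℝ in 𝓝[>] 0, |(f z).im| ≤ M * σ := by
    filter_upwards [hshift, self_mem_nhdsWithin] with σ ⟨w, hwU, hw⟩ (hσ : 0 < σ)
    simpa [hw, hz, abs_of_pos hσ] using hcone w hwU (by simp [hw, hz, hσ.ne'])
  have hlim : Tendsto (fun σ : ℝ => M * σ) (𝓝[>] 0) (𝓝 0) := by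
    simpa using ((continuous_const_mul M).tendsto 0).mono_left nhdsWithin_le_nhds
  exact abs_nonpos_iff.mp (ge_of_tendsto hlim hbound)

lemma norm_mul_sub_dist_le_of_re_pos {S : ℂ → ℂ} {c z : ℂ} {R : ℝ}
    (hS : DifferentiableOn ℂ S (ball c R)) (hpos : ∀ w ∈ ball c R, 0 < (S w).re)
    (hz : z ∈ ball c R) : ‖S z‖ * (R - dist z c) ≤ 3 * R * ‖S c‖ := by
  have hR : 0 < R := pos_of_mem_ball hz
  have hc : 0 < ‖S c‖ := (hpos c (mem_ball_self hR)).trans_le (re_le_norm _)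
  have hz' : z - c ∈ ball (0 : ℂ) R := by rwa [mem_ball_zero_iff, ← dist_eq]
  have hd : DifferentiableOn ℂ (fun w => -S (w + c)) (ball 0 R) := by
    refine (hS.comp (differentiableOn_id.add_const c) fun w hw => ?_).neg
    rwa [mem_ball, dist_eq, add_sub_cancel_right, ← dist_zero_right]
  have hmaps : MapsTo (fun w => -S (w + c)) (ball 0 R) {w | w.re ≤ ‖S c‖ / 2} := by
    intro w hw
    have := hpos (w + c) (by rwa [mem_ball, dist_eq, add_sub_cancel_right, ← dist_zero_right])
    simp only [mem_ofPred_eq, neg_re]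
    linarith
  have hBC := borelCaratheodory (half_pos hc) hd hmaps hR hz'
  simp only [sub_add_cancel, norm_neg, zero_add, ← dist_eq] at hBC
  have hdz : dist z c < R := mem_ball.mp hz
  have hdz0 := dist_nonneg (x := z) (y := c)
  rw [← add_div, le_div_iff₀ (by linarith)] at hBC
  nlinarith

lemma re_exp_neg_log_div_two_pos {z : ℂ} (hz : z ∈ slitPlane) : 0 < (exp (-(log z / 2))).re := by
  rw [exp_re]
  refine mul_pos (Real.exp_pos _) (Real.cos_pos_of_mem_Ioo ⟨?_, ?_⟩)
  all_goals
    have h1 := neg_pi_lt_arg z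
    have h2 := (arg_le_pi z).lt_of_ne (mem_slitPlane_iff_arg.mp hz).1
    simp only [neg_im, div_ofNat_im, log_im]
    linarith

lemma exp_neg_log_div_two_sq_mul {z : ℂ} (hz : z ≠ 0) : exp (-(log z / 2)) ^ 2 * z = 1 := by
  rw [← exp_nat_mul, show ((2 : ℕ) : ℂ) * -(log z / 2) = -log z by push_cast; ring, exp_neg,
    exp_log hz, inv_mul_cancel₀ hz]

lemma norm_mul_sub_dist_sq_le_of_mem_slitPlane {H : ℂ → ℂ} {c z : ℂ} {R : ℝ}
    (hH : DifferentiableOn ℂ H (ball c R)) (hslit : ∀ w ∈ ball c R, H w ∈ slitPlane)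
    (hz : z ∈ ball c R) : ‖H c‖ * (R - dist z c) ^ 2 ≤ 9 * R ^ 2 * ‖H z‖ := by
  set S := fun w => exp (-(log (H w) / 2))
  have hS : DifferentiableOn ℂ S (ball c R) :=
    ((hH.clog hslit).div_const 2).neg.cexp
  have hnorm : ∀ w ∈ ball c R, ‖S w‖ ^ 2 * ‖H w‖ = 1 := fun w hw => by
    rw [← norm_pow, ← norm_mul, exp_neg_log_div_two_sq_mul (slitPlane_ne_zero (hslit w hw)),
      norm_one]
  have hBC := norm_mul_sub_dist_le_of_re_pos hS
    (fun w hw => re_exp_neg_log_div_two_pos (hslit w hw)) hz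
  have hc := hnorm c (mem_ball_self (pos_of_mem_ball hz))
  have hz' := hnorm z hz
  have hdz : dist z c < R := mem_ball.mp hz
  have hsq := pow_le_pow_left₀ (mul_nonneg (norm_nonneg _) (by linarith)) hBC 2
  calc ‖H c‖ * (R - dist z c) ^ 2
      = ‖H c‖ * ‖H z‖ * ((‖S z‖ * (R - dist z c)) ^ 2) := by
        linear_combination (-(‖H c‖ * (R - dist z c) ^ 2)) * hz'
    _ ≤ ‖H c‖ * ‖H z‖ * ((3 * R * ‖S c‖) ^ 2) := by gcongr
    _ = 9 * R ^ 2 * ‖H z‖ := by linear_combination (9 * R ^ 2 * ‖H z‖) * hc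

lemma sq_add_mem_slitPlane {w : ℂ} (hw : w.re = 0 → w.im = 0) {ε : ℝ} (hε : 0 < ε) :
    w ^ 2 + ε ∈ slitPlane := by
  rw [mem_slitPlane_iff]
  simp only [sq, add_re, add_im, mul_re, mul_im, ofReal_re, ofReal_im, add_zero]
  by_cases him : w.im = 0
  · left; rw [him]; nlinarith
  · right
    have hre : w.re ≠ 0 := fun h => him (hw h)
    intro h
    exact mul_ne_zero hre him (by linarith)

lemma sq_norm_I_mul_le_of_norm_I_mul_le {F : ℂ → ℂ} {r y C : ℝ} (hC : 0 < C) (hy : y ∈ Ioo 0 r)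
    (hF : DifferentiableOn ℂ F (ball (I * r) r))
    (hcone : ∀ w ∈ ball (I * r) r, (F w).re = 0 → (F w).im = 0)
    (hFy : ‖F (I * y)‖ ≤ C * y ^ 2) :
    ‖F (I * r)‖ ^ 2 ≤ C ^ 2 * y ^ 4 + 18 * r ^ 2 * C ^ 2 * y ^ 2 := by
  obtain ⟨hy0, hyr⟩ := hy
  set ε := C ^ 2 * y ^ 4
  have hε : 0 < ε := by positivity
  have hdist : dist (I * y) (I * r) = r - y := by
    rw [dist_I_mul_I_mul, abs_of_neg (by linarith), neg_sub]
  have hgrowth := norm_mul_sub_dist_sq_le_of_mem_slitPlane (H := fun w => F w ^ 2 + ε)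
    ((hF.pow 2).add_const _) (fun w hw => sq_add_mem_slitPlane (hcone w hw) hε)
    (show I * y ∈ ball (I * r) r by rw [mem_ball, hdist]; linarith)
  simp only [hdist, sub_sub_cancel] at hgrowth
  have hcenter : ‖F (I * r)‖ ^ 2 - ε ≤ ‖F (I * r) ^ 2 + ε‖ := by
    have := norm_sub_le (F (I * r) ^ 2 + ε) (ε : ℂ)
    rw [add_sub_cancel_right, norm_pow, norm_real, Real.norm_of_nonneg hε.le] at this
    linarith
  have hedge : ‖F (I * y) ^ 2 + ε‖ ≤ 2 * ε := by
    calc ‖F (I * y) ^ 2 + ε‖ ≤ ‖F (I * y)‖ ^ 2 + ε := by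
          have := norm_add_le (F (I * y) ^ 2) (ε : ℂ)
          rwa [norm_pow, norm_real, Real.norm_of_nonneg hε.le] at this
      _ ≤ (C * y ^ 2) ^ 2 + ε := by gcongr
      _ = 2 * ε := by ring
  have key : (‖F (I * r)‖ ^ 2 - ε) * y ^ 2 ≤ 9 * r ^ 2 * (2 * ε) := by
    calc (‖F (I * r)‖ ^ 2 - ε) * y ^ 2 ≤ ‖F (I * r) ^ 2 + ε‖ * y ^ 2 := by gcongr
      _ ≤ 9 * r ^ 2 * ‖F (I * y) ^ 2 + ε‖ := hgrowth
      _ ≤ 9 * r ^ 2 * (2 * ε) := by gcongr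
  have hy2 : 0 < y ^ 2 := by positivity
  have : ‖F (I * r)‖ ^ 2 - ε ≤ 18 * r ^ 2 * C ^ 2 * y ^ 2 := by
    rw [← mul_le_mul_iff_left₀ hy2]; simp only [ε] at key ⊢; nlinarith
  linarith

lemma eventually_norm_I_mul_le {F : ℂ → ℂ} {k : ℕ}
    (h : ∃ Ck > (0 : ℝ), ∃ δ > (0 : ℝ), ∀ z ∈ upperHalfDisc, ‖z‖ < δ → ‖F z‖ ≤ Ck * ‖z‖ ^ k) :
    ∃ C > 0, ∀ᶠ y : ℝ in 𝓝[>] 0, ‖F (I * y)‖ ≤ C * y ^ k := by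
  obtain ⟨C, hC, δ, hδ, hF⟩ := h
  refine ⟨C, hC, ?_⟩
  filter_upwards [Ioo_mem_nhdsGT (lt_min hδ one_pos)] with y ⟨hy0, hy⟩
  have hnorm : ‖I * y‖ = y := by simp [abs_of_pos hy0]
  simpa [hnorm, abs_of_pos hy0] using
    hF (I * y) (I_mul_mem_upperHalfDisc ⟨hy0, hy.trans_le (min_le_right _ _)⟩)
      (by rw [hnorm]; exact hy.trans_le (min_le_left _ _))

lemma exists_I_mul_ne_zero {F : ℂ → ℂ} (hF : AnalyticOnNhd ℂ F upperHalfDisc) {z₀ : ℂ}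
    (hz₀ : z₀ ∈ upperHalfDisc) (hFz₀ : F z₀ ≠ 0) {ε : ℝ} (hε : 0 < ε) :
    ∃ r ∈ Ioo 0 ε, F (I * r) ≠ 0 := by
  by_contra! h
  set r₀ := min ε 1 / 2
  have hr₀ : r₀ ∈ Ioo 0 (min ε 1) :=
    ⟨by positivity, by simp only [r₀]; linarith [lt_min hε one_pos]⟩
  have hmaps : MapsTo (fun t : ℝ => I * t) {r₀}ᶜ {I * r₀}ᶜ := fun t ht h' =>
    ht (by simpa using h')
  have hT : Tendsto (fun t : ℝ => I * t) (𝓝[≠] r₀) (𝓝[≠] (I * r₀)) :=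
    (continuous_const.mul continuous_ofReal).continuousWithinAt.tendsto_nhdsWithin hmaps
  have hzeros : ∀ᶠ t : ℝ in 𝓝[≠] r₀, F (I * t) = 0 := by
    filter_upwards [nhdsWithin_le_nhds (Ioo_mem_nhds hr₀.1 hr₀.2)] with t ht
    exact h t ⟨ht.1, ht.2.trans_le (min_le_left _ _)⟩
  have hI : I * r₀ ∈ upperHalfDisc :=
    I_mul_mem_upperHalfDisc ⟨hr₀.1, hr₀.2.trans_le (min_le_right _ _)⟩
  exact hFz₀ (hF.eqOn_zero_of_preconnected_of_frequently_eq_zero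
    convex_upperHalfDisc.isPreconnected hI (hT.frequently hzeros.frequently) hz₀)

lemma eq_zero_of_eqOn_upperHalfDisc {F : ℂ → ℂ} {w : ℂ} (hw : ∀ z ∈ upperHalfDisc, F z = w)
    (h : ∃ Ck > (0 : ℝ), ∃ δ > (0 : ℝ), ∀ z ∈ upperHalfDisc, ‖z‖ < δ → ‖F z‖ ≤ Ck * ‖z‖ ^ 1) :
    w = 0 := by
  obtain ⟨C, -, hC⟩ := eventually_norm_I_mul_le h
  have hlim : Tendsto (fun y : ℝ => C * y ^ 1) (𝓝[>] 0) (𝓝 0) :=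
    (Continuous.tendsto' (by fun_prop) 0 0 (by simp)).mono_left nhdsWithin_le_nhds
  rw [← norm_le_zero_iff]
  refine ge_of_tendsto hlim ?_
  filter_upwards [hC, Ioo_mem_nhdsGT one_pos] with y hy hy1
  rwa [← hw _ (I_mul_mem_upperHalfDisc hy1)]

theorem main_result_general
    (F : ℂ → ℂ)
    (hF_hol : DifferentiableOn ℂ F upperHalfDisc)
    (hvanish : ∀ k : ℕ, ∃ Ck > (0 : ℝ), ∃ δ > (0 : ℝ),
      ∀ z ∈ upperHalfDisc, ‖z‖ < δ →
        ‖F z‖ ≤ Ck * ‖z‖ ^ k) :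
    (∀ z ∈ upperHalfDisc, F z = 0) ∨
    (∃ p : ℕ → ℂ,
      (∀ j, p j ∈ upperHalfDisc) ∧
      Filter.Tendsto p Filter.atTop (nhds 0) ∧
      (∀ j, (F (p j)).re ≠ 0) ∧
      (∀ M : ℝ, ∃ j, M < |(F (p j)).im| / |(F (p j)).re|)) := by
  have hF := hF_hol.analyticOnNhd isOpen_upperHalfDisc
  by_cases hzero : ∀ z ∈ upperHalfDisc, F z = 0
  · exact .inl hzero
  obtain ⟨z₀, hz₀, hFz₀⟩ := not_forall₂.mp hzero
  refine .inr (by_contra fun hseq => ?_)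
  obtain ⟨δ, hδ, M, hcone⟩ : ∃ δ > 0, ∃ M : ℝ, ∀ z ∈ upperHalfDisc ∩ ball 0 δ,
      (F z).re ≠ 0 → |(F z).im| ≤ M * |(F z).re| := by
    by_contra! h
    exact hseq (exists_seq_ratio_unbounded h)
  have hopen : ∀ s ⊆ upperHalfDisc, IsOpen s → IsOpen (F '' s) := by
    refine (hF.is_constant_or_isOpen convex_upperHalfDisc.isPreconnected).resolve_left ?_
    rintro ⟨w, hw⟩
    exact hFz₀ (by rw [hw z₀ hz₀]; exact eq_zero_of_eqOn_upperHalfDisc hw (hvanish 1))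
  have hre : ∀ z ∈ upperHalfDisc ∩ ball 0 δ, (F z).re = 0 → (F z).im = 0 := fun z hz =>
    im_eq_zero_of_re_eq_zero_of_image_mem_nhds ((hopen _ inter_subset_left
      (isOpen_upperHalfDisc.inter isOpen_ball)).mem_nhds ⟨z, hz, rfl⟩) hcone
  obtain ⟨r, ⟨hr0, hrδ⟩, hFr⟩ := exists_I_mul_ne_zero hF hz₀ hFz₀ (half_pos (lt_min hδ one_pos))
  have hball := ball_I_mul_subset (r := r) (δ := δ) (by linarith [min_le_left δ 1])
    (by linarith [min_le_right δ 1])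
  obtain ⟨C, hC, hFy⟩ := eventually_norm_I_mul_le (hvanish 2)
  have hlim : Tendsto (fun y : ℝ => C ^ 2 * y ^ 4 + 18 * r ^ 2 * C ^ 2 * y ^ 2) (𝓝[>] 0) (𝓝 0) :=
    (Continuous.tendsto' (by fun_prop) 0 0 (by simp)).mono_left nhdsWithin_le_nhds
  have hFr0 : ‖F (I * r)‖ ^ 2 ≤ 0 := ge_of_tendsto hlim <| by
    filter_upwards [hFy, Ioo_mem_nhdsGT hr0] with y hy hyr
    exact sq_norm_I_mul_le_of_norm_I_mul_le hC hyr (hF_hol.mono fun w hw => (hball hw).1)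
      (fun w hw => hre w (hball hw)) hy
  exact hFr (by simpa using hFr0)

/-- **Main result (Proposition 2.1).**
If `F` is holomorphic on `Δ⁺`, continuous on `Δ⁺ ∪ γ`, maps `γ` into the cone
`{|Im z| ≤ C|Re z|}` for some `C > 0`, and vanishes to infinite order at `0`,
then either `F ≡ 0` on `Δ⁺`, or there is a sequence in `Δ⁺` tending to `0` on which
`Re F ≠ 0` and `|Im F| / |Re F|` is unbounded. -/
theorem main_result
    (F : ℂ → ℂ)
    (hF_hol : DifferentiableOn ℂ F upperHalfDisc)
    (hF_cont : ContinuousOn F (upperHalfDisc ∪ realSegment))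
    (C : ℝ) (hC : 0 < C)
    (hcone : ∀ t ∈ realSegment, |(F t).im| ≤ C * |(F t).re|)
    (hvanish : ∀ k : ℕ, ∃ Ck > (0 : ℝ), ∃ δ > (0 : ℝ),
      ∀ z ∈ upperHalfDisc, ‖z‖ < δ →
        ‖F z‖ ≤ Ck * ‖z‖ ^ k) :
    (∀ z ∈ upperHalfDisc, F z = 0) ∨
    (∃ p : ℕ → ℂ,
      (∀ j, p j ∈ upperHalfDisc) ∧
      Filter.Tendsto p Filter.atTop (nhds 0) ∧
      (∀ j, (F (p j)).re ≠ 0) ∧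
      (∀ M : ℝ, ∃ j, M < |(F (p j)).im| / |(F (p j)).re|)) :=
  main_result_general F hF_hol hvanish
end

section
/- Let Ω ⊆ ℂ be a nonempty connected open set, let F be holomorphic on Ω and not identically zero, let B̂ ⊆ Ω be a nonempty open set, and let K > 0 be a constant such that |Im F(p)| ≤ K·|Re F(p)| for all p ∈ B̂. Then F(p) ≠ 0 for every p ∈ B̂. -/
open Filter Topology

/-- The points `t * I`, `t > 0`, tend to `0` from outside the cone. -/
theorem Complex.zero_notMem_interior_cone (K : ℝ) :
    (0 : ℂ) ∉ interior {z : ℂ | |z.im| ≤ K * |z.re|} := by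
  intro h0
  have hI : Tendsto (fun t : ℝ => (t : ℂ) * Complex.I) (𝓝[>] 0) (𝓝 0) := by
    refine Tendsto.mono_left ?_ nhdsWithin_le_nhds
    exact (by fun_prop : Continuous fun t : ℝ => (t : ℂ) * Complex.I).tendsto' 0 0 (by simp)
  obtain ⟨t, ht_cone, ht_pos⟩ :=
    ((hI.eventually (mem_interior_iff_mem_nhds.1 h0)).and self_mem_nhdsWithin).exists
  have : |t| ≤ 0 := by simpa using ht_cone
  exact (abs_pos.2 (ne_of_gt ht_pos)).not_ge this

theorem holomorphic_into_cone_nonvanishing_general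
    (Ω : Set ℂ) (hΩ_conn : IsConnected Ω) (hΩ_open : IsOpen Ω)
    (F : ℂ → ℂ) (hF_hol : DifferentiableOn ℂ F Ω)
    (hF_ne : ¬ (∀ z ∈ Ω, F z = 0))
    (Bhat : Set ℂ) (hB_open : IsOpen Bhat) (hB_sub : Bhat ⊆ Ω)
    (K : ℝ)
    (hcone : ∀ p ∈ Bhat, |(F p).im| ≤ K * |(F p).re|) :
    ∀ p ∈ Bhat, F p ≠ 0 := by
  intro p hp hFp
  rcases (hF_hol.analyticOnNhd hΩ_open).is_constant_or_isOpen hΩ_conn.isPreconnected with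
    ⟨v, hv⟩ | hopen
  · exact hF_ne fun z hz => by rw [hv z hz, ← hv p (hB_sub hp), hFp]
  · have hsub : F '' Bhat ⊆ interior {z : ℂ | |z.im| ≤ K * |z.re|} :=
      interior_maximal (by rintro _ ⟨q, hq, rfl⟩; exact hcone q hq) (hopen Bhat hB_sub hB_open)
    exact Complex.zero_notMem_interior_cone K (hsub ⟨p, hp, hFp⟩)

/-- **Equation (2.7) in the proof of Lemma 2.4.**  If `F` is holomorphic and not identically
zero on a nonempty connected open set `Ω ⊆ ℂ`, and `|Im F| ≤ K |Re F|` on a nonempty open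
subset `B̂ ⊆ Ω` for some `K > 0`, then `F` has no zero in `B̂`. -/
theorem holomorphic_into_cone_nonvanishing
    (Ω : Set ℂ) (hΩ_ne : Ω.Nonempty) (hΩ_conn : IsConnected Ω) (hΩ_open : IsOpen Ω)
    (F : ℂ → ℂ) (hF_hol : DifferentiableOn ℂ F Ω)
    (hF_ne : ¬ (∀ z ∈ Ω, F z = 0))
    (Bhat : Set ℂ) (hB_ne : Bhat.Nonempty) (hB_open : IsOpen Bhat) (hB_sub : Bhat ⊆ Ω)
    (K : ℝ) (hK : 0 < K)
    (hcone : ∀ p ∈ Bhat, |(F p).im| ≤ K * |(F p).re|) :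
    ∀ p ∈ Bhat, F p ≠ 0 :=
  holomorphic_into_cone_nonvanishing_general Ω hΩ_conn hΩ_open F hF_hol hF_ne Bhat hB_open hB_sub K
    hcone
end
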